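/- arXiv:2509.16475 — 4 statements merged into one kernel-verified Lean document; each statement's English description precedes it below -/
import Mathlib

section
/- Let p be a joint distribution on S × A × D factored as p(s,a,d) = p(s) p(a|s) p(d|s,a), and for λ: S → [0,1] define q(s,a,d) = p(s) · [λ(s) p(a) + (1−λ(s)) p(a|s)] · p(d|s,a). Then D_KL(p ‖ q) ≤ (Σ_s p(s) λ(s) Σ_a p(a|s) log(p(a|s)/p(a))), and in particular D_KL(p ‖ q) ≤ I_p(s, a). -/
/-
Conditioning on `s` and `a`, both `p` and `q` share the factors `p(s)` and `p(d|s,a)`, so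
`D_KL(p‖q) = Σ_s p(s) Σ_a p(a|s) log(p(a|s)/m_s(a))` with the mixture
`m_s(a) = λ(s) p(a) + (1-λ(s)) p(a|s)`. Concavity of `log` gives
`log m_s(a) ≥ λ(s) log p(a) + (1-λ(s)) log p(a|s)`, which is the first bound. The inner sums
`Σ_a p(a|s) log(p(a|s)/p(a))` are KL divergences, hence nonnegative by Gibbs' inequality, and
`λ(s) ≤ 1` then bounds the first estimate by the mutual information.
-/

open Finset

/-- KL divergence between pmfs on `S × A × D` (natural log). -/
noncomputable def KL3 {S A D : Type*} [Fintype S] [Fintype A] [Fintype D]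
    (p q : S → A → D → ℝ) : ℝ :=
  ∑ s, ∑ a, ∑ d, p s a d * Real.log (p s a d / q s a d)

open Real

lemma log_div_convexComb_le {x y t : ℝ} (hx : 0 < x) (hy : 0 < y) (ht₀ : 0 ≤ t)
    (ht₁ : t ≤ 1) :
    log (y / (t * x + (1 - t) * y)) ≤ t * log (y / x) := by
  have hconc := strictConcaveOn_log_Ioi.concaveOn.2 (Set.mem_Ioi.2 hx) (Set.mem_Ioi.2 hy) ht₀
    (sub_nonneg.2 ht₁) (add_sub_cancel t 1)
  have hmix : 0 < t * x + (1 - t) * y :=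
    convex_Ioi (0 : ℝ) hx hy ht₀ (sub_nonneg.2 ht₁) (add_sub_cancel t 1)
  simp only [smul_eq_mul] at hconc
  rw [log_div hy.ne' hmix.ne', log_div hy.ne' hx.ne']
  linarith

lemma sum_mul_log_div_nonneg {ι : Type*} {s : Finset ι} {P Q : ι → ℝ}
    (hP : ∀ i ∈ s, 0 < P i) (hQ : ∀ i ∈ s, 0 < Q i)
    (hmass : ∑ i ∈ s, Q i ≤ ∑ i ∈ s, P i) :
    0 ≤ ∑ i ∈ s, P i * log (P i / Q i) := by
  have hterm : ∀ i ∈ s, P i - Q i ≤ P i * log (P i / Q i) := fun i hi => by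
    have h := one_sub_inv_le_log_of_pos (div_pos (hP i hi) (hQ i hi))
    rw [inv_div] at h
    calc P i - Q i = P i * (1 - Q i / P i) := by field_simp [(hP i hi).ne']
      _ ≤ P i * log (P i / Q i) := mul_le_mul_of_nonneg_left h (hP i hi).le
  calc 0 ≤ ∑ i ∈ s, (P i - Q i) := by rw [sum_sub_distrib]; linarith
    _ ≤ _ := sum_le_sum hterm

lemma KL3_le_of_mixture {S A D : Type*} [Fintype S] [Fintype A] [Fintype D]
    {p q : S → A → D → ℝ} {pS lam : S → ℝ} {pA : A → ℝ} {pAcond : S → A → ℝ}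
    {pDcond : S → A → D → ℝ} (hpS : ∀ s, 0 < pS s) (hpA : ∀ a, 0 < pA a)
    (hpAcond : ∀ s a, 0 < pAcond s a) (hpDcond : ∀ s a d, 0 < pDcond s a d)
    (hpDcond_sum : ∀ s a, ∑ d, pDcond s a d = 1)
    (hlam₀ : ∀ s, 0 ≤ lam s) (hlam₁ : ∀ s, lam s ≤ 1)
    (hp : ∀ s a d, p s a d = pS s * pAcond s a * pDcond s a d)
    (hq : ∀ s a d, q s a d = pS s * (lam s * pA a + (1 - lam s) * pAcond s a) * pDcond s a d) :
    KL3 p q ≤ ∑ s, pS s * lam s * ∑ a, pAcond s a * log (pAcond s a / pA a) := by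
  have hratio : ∀ s a d, p s a d / q s a d =
      pAcond s a / (lam s * pA a + (1 - lam s) * pAcond s a) := fun s a d => by
    rw [hp, hq, mul_div_mul_right _ _ (hpDcond s a d).ne', mul_div_mul_left _ _ (hpS s).ne']
  calc KL3 p q = ∑ s, ∑ a, pS s * pAcond s a *
        log (pAcond s a / (lam s * pA a + (1 - lam s) * pAcond s a)) := by
        refine sum_congr rfl fun s _ => sum_congr rfl fun a _ => ?_
        simp_rw [hratio, hp, ← sum_mul, ← mul_sum, hpDcond_sum, mul_one]
    _ ≤ ∑ s, ∑ a, pS s * pAcond s a * (lam s * log (pAcond s a / pA a)) := by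
        gcongr with s _ a _
        · exact (mul_pos (hpS s) (hpAcond s a)).le
        · exact log_div_convexComb_le (hpA a) (hpAcond s a) (hlam₀ s) (hlam₁ s)
    _ = _ := by simp_rw [mul_sum]; exact sum_congr rfl fun s _ => sum_congr rfl fun a _ => by ring

/-- With the mixing parametrization
`q(s,a,d) = p(s) [λ(s) p(a) + (1−λ(s)) p(a|s)] p(d|s,a)`, the utility loss is
bounded: `D_KL(p‖q) ≤ Σ_s p(s) λ(s) Σ_a p(a|s) log(p(a|s)/p(a))`, and in
particular `D_KL(p‖q) ≤ I_p(s,a)`. -/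
theorem stmt7 {S A D : Type*} [Fintype S] [Fintype A] [Fintype D]
    [Nonempty S] [Nonempty A] [Nonempty D]
    (p : S → A → D → ℝ)
    (hp : ∀ s a d, 0 < p s a d)
    (hsum : ∑ s, ∑ a, ∑ d, p s a d = 1)
    (pS : S → ℝ) (hpS : ∀ s, pS s = ∑ a, ∑ d, p s a d)
    (pA : A → ℝ) (hpA : ∀ a, pA a = ∑ s, ∑ d, p s a d)
    (pAcond : S → A → ℝ)
    (hpAcond : ∀ s a, pAcond s a = (∑ d, p s a d) / pS s)
    (pDcond : S → A → D → ℝ)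
    (hpD : ∀ s a d, pDcond s a d = p s a d / (∑ d', p s a d'))
    (lam : S → ℝ) (hlam0 : ∀ s, 0 ≤ lam s) (hlam1 : ∀ s, lam s ≤ 1)
    (q : S → A → D → ℝ)
    (hq : ∀ s a d, q s a d =
      pS s * (lam s * pA a + (1 - lam s) * pAcond s a) * pDcond s a d)
    (Ip : ℝ)
    (hIp : Ip = ∑ s, ∑ a, pS s * pAcond s a * Real.log (pAcond s a / pA a)) :
    KL3 p q ≤ ∑ s, pS s * lam s * ∑ a, pAcond s a * Real.log (pAcond s a / pA a) ∧
    KL3 p q ≤ Ip := by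
  have hpSA : ∀ s a, 0 < ∑ d, p s a d := fun s a => sum_pos (fun d _ => hp s a d) univ_nonempty
  have hpS_pos : ∀ s, 0 < pS s := fun s => hpS s ▸ sum_pos (fun a _ => hpSA s a) univ_nonempty
  have hpA_pos : ∀ a, 0 < pA a := fun a => hpA a ▸ sum_pos (fun s _ => hpSA s a) univ_nonempty
  have hpAcond_pos : ∀ s a, 0 < pAcond s a := fun s a =>
    hpAcond s a ▸ div_pos (hpSA s a) (hpS_pos s)
  have hpAcond_sum : ∀ s, ∑ a, pAcond s a = 1 := fun s => by
    simp_rw [hpAcond, ← sum_div, ← hpS, div_self (hpS_pos s).ne']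
  have hpA_sum : ∑ a, pA a = 1 := by simp_rw [hpA]; rw [sum_comm, hsum]
  have hfactor : ∀ s a d, p s a d = pS s * pAcond s a * pDcond s a d := fun s a d => by
    rw [hpAcond, hpD, mul_div_cancel₀ _ (hpS_pos s).ne', mul_div_cancel₀ _ (hpSA s a).ne']
  have hKL := KL3_le_of_mixture hpS_pos hpA_pos hpAcond_pos
    (fun s a d => hpD s a d ▸ div_pos (hp s a d) (hpSA s a))
    (fun s a => by simp_rw [hpD, ← sum_div, div_self (hpSA s a).ne']) hlam0 hlam1 hfactor hq
  have hgibbs : ∀ s, 0 ≤ ∑ a, pAcond s a * log (pAcond s a / pA a) := fun s =>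
    sum_mul_log_div_nonneg (fun a _ => hpAcond_pos s a) (fun a _ => hpA_pos a)
      (by rw [hpA_sum, hpAcond_sum])
  refine ⟨hKL, hKL.trans ?_⟩
  rw [hIp]
  refine sum_le_sum fun s _ => ?_
  simp_rw [mul_assoc, ← mul_sum]
  exact mul_le_mul_of_nonneg_left (mul_le_of_le_one_left (hgibbs s) (hlam1 s)) (hpS_pos s).le
end

section
/- Let p be a joint distribution on S × A, and for a constant λ ∈ [0,1] define the joint distribution q(s,a) = p(s) · [λ p(a) + (1−λ) p(a|s)]. Then the mutual information under q satisfies I_q(s,a) ≤ (1−λ) I_p(s,a). -/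
/-! Writing `q = λ (p_S ⊗ p_A) + (1 - λ) p`, the marginals of `q` are those of `p`, so both
mutual informations are sums of `p(s) p(a) φ(r(s,a) / (p(s) p(a)))` with `φ t = t log t`
(for `r = q`, resp. `r = p`). As `q / (p_S ⊗ p_A) = λ + (1 - λ) t` with `t = p / (p_S ⊗ p_A)`,
convexity of `φ` and `φ 1 = 0` give the termwise bound `φ (λ + (1 - λ) t) ≤ (1 - λ) φ t`. -/

open Finset

/-- Mutual information of a joint pmf on `S × A` (natural log). -/
noncomputable def MI2 {S A : Type*} [Fintype S] [Fintype A] (r : S → A → ℝ) : ℝ :=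
  ∑ s, ∑ a, r s a * Real.log (r s a / ((∑ a', r s a') * (∑ s', r s' a)))

lemma mix_mul_log_div_le {m x l : ℝ} (hm : 0 < m) (hx : 0 ≤ x) (hl0 : 0 ≤ l) (hl1 : l ≤ 1) :
    (l * m + (1 - l) * x) * Real.log ((l * m + (1 - l) * x) / m)
      ≤ (1 - l) * (x * Real.log (x / m)) := by
  obtain ⟨t, ht, rfl⟩ : ∃ t, 0 ≤ t ∧ x = m * t :=
    ⟨x / m, div_nonneg hx hm.le, (mul_div_cancel₀ x hm.ne').symm⟩
  have hconv : (l • 1 + (1 - l) • t) * Real.log (l • 1 + (1 - l) • t)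
      ≤ l • (1 * Real.log 1) + (1 - l) • (t * Real.log t) :=
    Real.convexOn_mul_log.2 (Set.mem_Ici.mpr zero_le_one) (Set.mem_Ici.mpr ht) hl0
      (by linarith) (by ring)
  simp only [smul_eq_mul, mul_one, Real.log_one, mul_zero, zero_add] at hconv
  have hmix_eq : l * m + (1 - l) * (m * t) = m * (l + (1 - l) * t) := by ring
  rw [hmix_eq, mul_div_cancel_left₀ _ hm.ne', mul_div_cancel_left₀ _ hm.ne']
  calc m * (l + (1 - l) * t) * Real.log (l + (1 - l) * t)
      = m * ((l + (1 - l) * t) * Real.log (l + (1 - l) * t)) := by ring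
    _ ≤ m * ((1 - l) * (t * Real.log t)) := mul_le_mul_of_nonneg_left hconv hm.le
    _ = (1 - l) * (m * t * Real.log t) := by ring

section MutualInformation

variable {S A : Type*} [Fintype S] [Fintype A]

lemma MI2_eq_of_marginals (r : S → A → ℝ) (u : S → ℝ) (v : A → ℝ)
    (hu : ∀ s, ∑ a, r s a = u s) (hv : ∀ a, ∑ s, r s a = v a) :
    MI2 r = ∑ s, ∑ a, r s a * Real.log (r s a / (u s * v a)) := by
  simp only [MI2, hu, hv]

lemma MI2_mix_prod_marginals_le (p : S → A → ℝ) (hp : ∀ s a, 0 < p s a)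
    (hsum : ∑ s, ∑ a, p s a = 1) {l : ℝ} (hl0 : 0 ≤ l) (hl1 : l ≤ 1) :
    MI2 (fun s a => l * ((∑ a', p s a') * ∑ s', p s' a) + (1 - l) * p s a)
      ≤ (1 - l) * MI2 p := by
  have hrow_sum : ∑ s, ∑ a', p s a' = 1 := hsum
  have hcol_sum : ∑ a, ∑ s', p s' a = 1 := by rw [sum_comm]; exact hsum
  rw [MI2_eq_of_marginals _ (fun s => ∑ a', p s a') (fun a => ∑ s', p s' a), MI2, mul_sum]
  · refine sum_le_sum fun s _ => ?_
    rw [mul_sum]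
    refine sum_le_sum fun a _ => mix_mul_log_div_le ?_ (hp s a).le hl0 hl1
    exact mul_pos (sum_pos (fun a' _ => hp s a') ⟨a, mem_univ a⟩)
      (sum_pos (fun s' _ => hp s' a) ⟨s, mem_univ s⟩)
  · intro s
    rw [sum_add_distrib, ← mul_sum, ← mul_sum, ← mul_sum,
      hcol_sum]
    ring
  · intro a
    rw [sum_add_distrib, ← mul_sum, ← sum_mul, ← mul_sum,
      hrow_sum]
    ring

end MutualInformation

theorem stmt8_general {S A : Type*} [Fintype S] [Fintype A]
    (p : S → A → ℝ)
    (hp : ∀ s a, 0 < p s a)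
    (hsum : ∑ s, ∑ a, p s a = 1)
    (pS : S → ℝ) (hpS : ∀ s, pS s = ∑ a, p s a)
    (pA : A → ℝ) (hpA : ∀ a, pA a = ∑ s, p s a)
    (pAcond : S → A → ℝ) (hpAcond : ∀ s a, pAcond s a = p s a / pS s)
    (l : ℝ) (hl0 : 0 ≤ l) (hl1 : l ≤ 1)
    (q : S → A → ℝ)
    (hq : ∀ s a, q s a = pS s * (l * pA a + (1 - l) * pAcond s a)) :
    MI2 q ≤ (1 - l) * MI2 p := by
  have hq_mix : q = fun s a => l * ((∑ a', p s a') * ∑ s', p s' a) + (1 - l) * p s a := by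
    funext s a
    have hpS_ne : pS s ≠ 0 := by
      rw [hpS]; exact (sum_pos (fun a' _ => hp s a') ⟨a, mem_univ a⟩).ne'
    rw [hq, hpAcond, ← hpS, ← hpA]
    field_simp
  rw [hq_mix]
  exact MI2_mix_prod_marginals_le p hp hsum hl0 hl1

/-- For `q(s,a) = p(s)(λ p(a) + (1−λ) p(a|s))` with constant `λ ∈ [0,1]`,
the mutual information under `q` satisfies `I_q(s,a) ≤ (1−λ) I_p(s,a)`. -/
theorem stmt8 {S A : Type*} [Fintype S] [Fintype A] [Nonempty S] [Nonempty A]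
    (p : S → A → ℝ)
    (hp : ∀ s a, 0 < p s a)
    (hsum : ∑ s, ∑ a, p s a = 1)
    (pS : S → ℝ) (hpS : ∀ s, pS s = ∑ a, p s a)
    (pA : A → ℝ) (hpA : ∀ a, pA a = ∑ s, p s a)
    (pAcond : S → A → ℝ) (hpAcond : ∀ s a, pAcond s a = p s a / pS s)
    (l : ℝ) (hl0 : 0 ≤ l) (hl1 : l ≤ 1)
    (q : S → A → ℝ)
    (hq : ∀ s a, q s a = pS s * (l * pA a + (1 - l) * pAcond s a)) :
    MI2 q ≤ (1 - l) * MI2 p :=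
  stmt8_general p hp hsum pS hpS pA hpA pAcond hpAcond l hl0 hl1 q hq
end

section
/- Fairness–utility total loss bound: let p be a joint distribution on S × A × D factored as p(s,a,d) = p(s) p(a|s) p(d|s,a), fix λ ∈ [0,1], and define q(s,a,d) = p(s) · [λ p(a) + (1−λ) p(a|s)] · p(d|s,a). Then I_q(s, a) + D_KL(p ‖ q) ≤ I_p(s, a), where I_q(s,a) is the mutual information between s and a under the marginal of q. -/
open Finset

/-!
Since `q` keeps the conditional `p(d|s,a)`, the chain rule reduces `D_KL(p‖q)` to the divergence
of the `(s,a)`-marginals `r = p(s,a)` and `m = λ p(s)p(a) + (1-λ) p(s,a)`, and `m` has the same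
marginals `p(s)`, `p(a)` as `r`. The bound then holds term by term: with `u = p(s)p(a)`,
`m log(m/u) + r log(r/m) - r log(r/u) = (m - r)(log m - log u)`, which is `≤ 0` because `m`
lies between `u` and `r`.
-/

open Real

lemma mul_log_div_add_mul_log_div_le {u r m : ℝ} (hu : 0 < u) (hr : 0 < r)
    (hm : m ∈ Set.uIcc u r) :
    m * log (m / u) + r * log (r / m) ≤ r * log (r / u) := by
  have hm0 : 0 < m := (lt_min hu hr).trans_le hm.1
  rw [log_div hm0.ne' hu.ne', log_div hr.ne' hm0.ne', log_div hr.ne' hu.ne']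
  suffices (m - r) * (log m - log u) ≤ 0 by linarith
  rcases le_total u r with h | h
  · rw [Set.uIcc_of_le h] at hm
    exact mul_nonpos_of_nonpos_of_nonneg (by linarith [hm.2])
      (sub_nonneg.2 (log_le_log hu hm.1))
  · rw [Set.uIcc_of_ge h] at hm
    exact mul_nonpos_of_nonneg_of_nonpos (by linarith [hm.1])
      (sub_nonpos.2 (log_le_log hm0 hm.2))

lemma sum_eq_of_eq_mul_cond {S A D : Type*} [Fintype D] {p q : S → A → D → ℝ} {m : S → A → ℝ}
    (hr : ∀ s a, ∑ d, p s a d ≠ 0)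
    (hq : ∀ s a d, q s a d = m s a * (p s a d / ∑ d', p s a d')) (s : S) (a : A) :
    ∑ d, q s a d = m s a := by
  simp only [hq, ← mul_sum, ← sum_div, div_self (hr s a), mul_one]

lemma KL3_eq_of_eq_mul_cond {S A D : Type*} [Fintype S] [Fintype A] [Fintype D]
    {p q : S → A → D → ℝ} {m : S → A → ℝ}
    (hr : ∀ s a, ∑ d, p s a d ≠ 0)
    (hq : ∀ s a d, q s a d = m s a * (p s a d / ∑ d', p s a d')) :
    KL3 p q = ∑ s, ∑ a, (∑ d, p s a d) * log ((∑ d, p s a d) / m s a) := by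
  refine sum_congr rfl fun s _ => sum_congr rfl fun a _ => ?_
  rw [sum_mul]
  refine sum_congr rfl fun d _ => ?_
  rcases eq_or_ne (p s a d) 0 with h | h
  · simp [h]
  · rw [hq]
    congr 2
    field_simp [hr s a]

section Mixture

variable {S A : Type*} [Fintype S] [Fintype A]

/-- The mixture `λ p(s)p(a) + (1-λ) p(s,a)` of a joint pmf with the product of its marginals. -/
noncomputable def indepMix (l : ℝ) (r : S → A → ℝ) (s : S) (a : A) : ℝ :=
  l * ((∑ a', r s a') * ∑ s', r s' a) + (1 - l) * r s a

variable {r : S → A → ℝ}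

lemma sum_indepMix_right (l : ℝ) (hr1 : ∑ s, ∑ a, r s a = 1) (s : S) :
    ∑ a, indepMix l r s a = ∑ a, r s a := by
  have hcol : ∑ a, ∑ s', r s' a = 1 := by rw [sum_comm, hr1]
  simp only [indepMix, sum_add_distrib, ← mul_sum, hcol]
  ring

lemma sum_indepMix_left (l : ℝ) (hr1 : ∑ s, ∑ a, r s a = 1) (a : A) :
    ∑ s, indepMix l r s a = ∑ s, r s a := by
  simp only [indepMix, sum_add_distrib, ← mul_sum, ← sum_mul, hr1]
  ring

lemma MI2_indepMix_add_le (hr : ∀ s a, 0 < r s a) (hr1 : ∑ s, ∑ a, r s a = 1)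
    {l : ℝ} (hl0 : 0 ≤ l) (hl1 : l ≤ 1) :
    MI2 (indepMix l r) + ∑ s, ∑ a, r s a * log (r s a / indepMix l r s a) ≤ MI2 r := by
  unfold MI2
  simp only [sum_indepMix_right l hr1, sum_indepMix_left l hr1, ← sum_add_distrib]
  refine sum_le_sum fun s _ => sum_le_sum fun a _ => ?_
  have hrow : r s a ≤ ∑ a', r s a' := single_le_sum (fun a' _ => (hr s a').le) (mem_univ a)
  have hcol : r s a ≤ ∑ s', r s' a := single_le_sum (fun s' _ => (hr s' a).le) (mem_univ s)
  have hu : 0 < (∑ a', r s a') * ∑ s', r s' a :=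
    mul_pos ((hr s a).trans_le hrow) ((hr s a).trans_le hcol)
  refine mul_log_div_add_mul_log_div_le hu (hr s a) ?_
  exact convex_uIcc _ _ Set.left_mem_uIcc Set.right_mem_uIcc hl0 (sub_nonneg.2 hl1)
    (add_sub_cancel l 1)

end Mixture

theorem stmt9_general {S A D : Type*} [Fintype S] [Fintype A] [Fintype D]
    [Nonempty D]
    (p : S → A → D → ℝ)
    (hp : ∀ s a d, 0 < p s a d)
    (hsum : ∑ s, ∑ a, ∑ d, p s a d = 1)
    (pS : S → ℝ) (hpS : ∀ s, pS s = ∑ a, ∑ d, p s a d)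
    (pA : A → ℝ) (hpA : ∀ a, pA a = ∑ s, ∑ d, p s a d)
    (pAcond : S → A → ℝ)
    (hpAcond : ∀ s a, pAcond s a = (∑ d, p s a d) / pS s)
    (pDcond : S → A → D → ℝ)
    (hpD : ∀ s a d, pDcond s a d = p s a d / (∑ d', p s a d'))
    (l : ℝ) (hl0 : 0 ≤ l) (hl1 : l ≤ 1)
    (q : S → A → D → ℝ)
    (hq : ∀ s a d, q s a d =
      pS s * (l * pA a + (1 - l) * pAcond s a) * pDcond s a d) :
    MI2 (fun s a => ∑ d, q s a d) + KL3 p q ≤ MI2 (fun s a => ∑ d, p s a d) := by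
  set r : S → A → ℝ := fun s a => ∑ d, p s a d
  have hr : ∀ s a, 0 < r s a := fun s a => sum_pos (fun d _ => hp s a d) univ_nonempty
  have hq_mix : ∀ s a d, q s a d = indepMix l r s a * (p s a d / ∑ d', p s a d') := by
    intro s a d
    have hpS_pos : 0 < pS s := (hpS s).symm ▸ sum_pos (fun a _ => hr s a) ⟨a, mem_univ a⟩
    rw [hq, hpD, hpAcond, indepMix, ← hpS, show ∑ s', r s' a = pA a from (hpA a).symm]
    field_simp
    ring
  have hr0 : ∀ s a, ∑ d, p s a d ≠ 0 := fun s a => (hr s a).ne'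
  rw [KL3_eq_of_eq_mul_cond hr0 hq_mix,
    show (fun s a => ∑ d, q s a d) = indepMix l r from
      funext₂ (sum_eq_of_eq_mul_cond hr0 hq_mix)]
  exact MI2_indepMix_add_le hr hsum hl0 hl1

/-- Fairness–utility total loss bound: for
`q(s,a,d) = p(s)[λ p(a) + (1−λ) p(a|s)] p(d|s,a)` with `λ ∈ [0,1]`,
`I_q(s,a) + D_KL(p‖q) ≤ I_p(s,a)`, where `I_q(s,a)` is the mutual information
of the marginal of `q` on `S × A`. -/
theorem stmt9 {S A D : Type*} [Fintype S] [Fintype A] [Fintype D]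
    [Nonempty S] [Nonempty A] [Nonempty D]
    (p : S → A → D → ℝ)
    (hp : ∀ s a d, 0 < p s a d)
    (hsum : ∑ s, ∑ a, ∑ d, p s a d = 1)
    (pS : S → ℝ) (hpS : ∀ s, pS s = ∑ a, ∑ d, p s a d)
    (pA : A → ℝ) (hpA : ∀ a, pA a = ∑ s, ∑ d, p s a d)
    (pAcond : S → A → ℝ)
    (hpAcond : ∀ s a, pAcond s a = (∑ d, p s a d) / pS s)
    (pDcond : S → A → D → ℝ)
    (hpD : ∀ s a d, pDcond s a d = p s a d / (∑ d', p s a d'))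
    (l : ℝ) (hl0 : 0 ≤ l) (hl1 : l ≤ 1)
    (q : S → A → D → ℝ)
    (hq : ∀ s a d, q s a d =
      pS s * (l * pA a + (1 - l) * pAcond s a) * pDcond s a d) :
    MI2 (fun s a => ∑ d, q s a d) + KL3 p q ≤ MI2 (fun s a => ∑ d, p s a d) :=
  stmt9_general p hp hsum pS hpS pA hpA pAcond hpAcond pDcond hpD l hl0 hl1 q hq
end

section
/- Monotonicity of the utility loss in the mixing weight: for a strictly positive joint distribution p on S × A and 0 ≤ λ₁ ≤ λ₂ ≤ 1, letting q_λ(s,a) = p(s)(λ p(a) + (1−λ) p(a|s)), one has D_KL(p ‖ q_{λ₁}) ≤ D_KL(p ‖ q_{λ₂}). -/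
open Finset

/-- KL divergence between pmfs on `S × A` (natural log). -/
noncomputable def KL2 {S A : Type*} [Fintype S] [Fintype A] (p q : S → A → ℝ) : ℝ :=
  ∑ s, ∑ a, p s a * Real.log (p s a / q s a)

lemma log_mix_aux (t x : ℝ) (ht0 : 0 ≤ t) (ht1 : t ≤ 1) (hx : 0 < x) :
    t * Real.log x ≤ Real.log ((1 - t) + t * x) := by
  have h := (strictConcaveOn_log_Ioi.concaveOn).2 (Set.mem_Ioi.2 one_pos)
    (Set.mem_Ioi.2 hx) (by linarith : (0:ℝ) ≤ 1 - t) ht0 (by ring)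
  simpa [smul_eq_mul, Real.log_one] using h

lemma KL2_nonneg_aux {S A : Type*} [Fintype S] [Fintype A] (p q : S → A → ℝ)
    (hp : ∀ s a, 0 < p s a) (hq : ∀ s a, 0 < q s a)
    (hps : ∑ s, ∑ a, p s a = 1) (hqs : ∑ s, ∑ a, q s a = 1) :
    0 ≤ ∑ s, ∑ a, p s a * Real.log (p s a / q s a) := by
  have key : ∀ s a, p s a - q s a ≤ p s a * Real.log (p s a / q s a) := by
    intro s a
    have hlog : Real.log (q s a / p s a) ≤ q s a / p s a - 1 :=
      Real.log_le_sub_one_of_pos (div_pos (hq s a) (hp s a))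
    have hinv : Real.log (p s a / q s a) = - Real.log (q s a / p s a) := by
      rw [← Real.log_inv]; congr 1; field_simp
    rw [hinv]
    have hppos := hp s a
    have h2 : p s a * (q s a / p s a - 1) = q s a - p s a := by field_simp
    nlinarith [mul_le_mul_of_nonneg_left hlog (le_of_lt hppos)]
  calc (0:ℝ) = (∑ s, ∑ a, p s a) - (∑ s, ∑ a, q s a) := by rw [hps, hqs]; ring
    _ = ∑ s, ∑ a, (p s a - q s a) := by rw [← Finset.sum_sub_distrib]; congr 1; ext s; rw [← Finset.sum_sub_distrib]
    _ ≤ ∑ s, ∑ a, p s a * Real.log (p s a / q s a) :=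
        Finset.sum_le_sum fun s _ => Finset.sum_le_sum fun a _ => key s a

/-- Monotonicity of the utility loss in the mixing weight: for
`q_λ(s,a) = p(s)(λ p(a) + (1−λ) p(a|s))` and `0 ≤ λ₁ ≤ λ₂ ≤ 1`,
`D_KL(p‖q_{λ₁}) ≤ D_KL(p‖q_{λ₂})`. -/
theorem stmt17 {S A : Type*} [Fintype S] [Fintype A] [Nonempty S] [Nonempty A]
    (p : S → A → ℝ)
    (hp : ∀ s a, 0 < p s a)
    (hsum : ∑ s, ∑ a, p s a = 1)
    (pS : S → ℝ) (hpS : ∀ s, pS s = ∑ a, p s a)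
    (pA : A → ℝ) (hpA : ∀ a, pA a = ∑ s, p s a)
    (pAcond : S → A → ℝ) (hpAcond : ∀ s a, pAcond s a = p s a / pS s)
    (qmix : ℝ → S → A → ℝ)
    (hqmix : ∀ l s a, qmix l s a = pS s * (l * pA a + (1 - l) * pAcond s a))
    (l₁ l₂ : ℝ) (h0 : 0 ≤ l₁) (h12 : l₁ ≤ l₂) (h1 : l₂ ≤ 1) :
    KL2 p (qmix l₁) ≤ KL2 p (qmix l₂) := by
  have hpS_pos : ∀ s, 0 < pS s := fun s => by
    rw [hpS]; exact Finset.sum_pos (fun a _ => hp s a) Finset.univ_nonempty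
  have hpA_pos : ∀ a, 0 < pA a := fun a => by
    rw [hpA]; exact Finset.sum_pos (fun s _ => hp s a) Finset.univ_nonempty
  have hpc_pos : ∀ s a, 0 < pAcond s a := fun s a => by
    rw [hpAcond]; exact div_pos (hp s a) (hpS_pos s)
  have hkey : ∀ s a, pS s * pAcond s a = p s a := fun s a => by
    rw [hpAcond, mul_comm]; exact div_mul_cancel₀ _ (ne_of_gt (hpS_pos s))
  have hq_pos : ∀ l, 0 ≤ l → l ≤ 1 → ∀ s a, 0 < qmix l s a := by
    intro l hl0 hl1 s a
    rw [hqmix]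
    apply mul_pos (hpS_pos s)
    rcases eq_or_lt_of_le hl0 with h | h
    · simp [← h]; nlinarith [hpc_pos s a]
    · nlinarith [hpA_pos a, hpc_pos s a, mul_pos h (hpA_pos a),
        mul_nonneg (by linarith : (0:ℝ) ≤ 1 - l) (le_of_lt (hpc_pos s a))]
  have hSsum : ∑ s, pS s = 1 := by
    calc ∑ s, pS s = ∑ s, ∑ a, p s a := by simp [hpS]
      _ = 1 := hsum
  have hAsum : ∑ a, pA a = 1 := by
    calc ∑ a, pA a = ∑ a, ∑ s, p s a := by simp [hpA]
      _ = ∑ s, ∑ a, p s a := Finset.sum_comm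
      _ = 1 := hsum
  have hqsum : ∀ l, ∑ s, ∑ a, qmix l s a = 1 := by
    intro l
    have : ∀ s a, qmix l s a = l * (pS s * pA a) + (1 - l) * p s a := by
      intro s a; rw [hqmix, ← hkey s a]; ring
    calc ∑ s, ∑ a, qmix l s a
        = ∑ s, ∑ a, (l * (pS s * pA a) + (1 - l) * p s a) := by
          exact Finset.sum_congr rfl fun s _ => Finset.sum_congr rfl fun a _ => this s a
      _ = (∑ s, ∑ a, l * (pS s * pA a)) + ∑ s, ∑ a, (1 - l) * p s a := by
          rw [← Finset.sum_add_distrib]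
          exact Finset.sum_congr rfl fun s _ => Finset.sum_add_distrib
      _ = l * ((∑ s, pS s) * (∑ a, pA a)) + (1 - l) * ∑ s, ∑ a, p s a := by
          congr 1
          · rw [Finset.sum_mul_sum, Finset.mul_sum]
            exact Finset.sum_congr rfl fun s _ => (Finset.mul_sum _ _ _).symm
          · rw [Finset.mul_sum]
            exact Finset.sum_congr rfl fun s _ => (Finset.mul_sum _ _ _).symm
      _ = 1 := by rw [hSsum, hAsum, hsum]; ring
  rcases eq_or_lt_of_le (le_trans h0 h12) with hl2 | hl2
  · have : l₁ = l₂ := le_antisymm h12 (by rw [← hl2]; exact h0)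
    rw [this]
  · set t := l₁ / l₂ with ht
    have ht0 : 0 ≤ t := div_nonneg h0 (le_of_lt hl2)
    have ht1 : t ≤ 1 := (div_le_one hl2).2 h12
    have hl1 : l₁ = t * l₂ := by rw [ht, div_mul_cancel₀ _ (ne_of_gt hl2)]
    have hmixq : ∀ s a, qmix l₁ s a = (1 - t) * p s a + t * qmix l₂ s a := by
      intro s a
      rw [hqmix, hqmix, ← hkey s a, hl1]; ring
    have hptw : ∀ s a, p s a * Real.log (p s a / qmix l₁ s a)
        ≤ t * (p s a * Real.log (p s a / qmix l₂ s a)) := by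
      intro s a
      have hpp := hp s a
      have hq2 := hq_pos l₂ (le_trans h0 h12) h1 s a
      have hq1 := hq_pos l₁ h0 (le_trans h12 h1) s a
      have hx : (0:ℝ) < qmix l₂ s a / p s a := div_pos hq2 hpp
      have hmain := log_mix_aux t (qmix l₂ s a / p s a) ht0 ht1 hx
      have harg : (1 - t) + t * (qmix l₂ s a / p s a) = qmix l₁ s a / p s a := by
        rw [hmixq s a]; field_simp
      rw [harg] at hmain
      have h1' : Real.log (p s a / qmix l₁ s a) = - Real.log (qmix l₁ s a / p s a) := by
        rw [← Real.log_inv]; congr 1; field_simp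
      have h2' : Real.log (p s a / qmix l₂ s a) = - Real.log (qmix l₂ s a / p s a) := by
        rw [← Real.log_inv]; congr 1; field_simp
      rw [h1', h2']
      nlinarith [mul_le_mul_of_nonneg_left hmain (le_of_lt hpp)]
    have hKL2nn : 0 ≤ KL2 p (qmix l₂) :=
      KL2_nonneg_aux p (qmix l₂) hp (hq_pos l₂ (le_trans h0 h12) h1) hsum (hqsum l₂)
    calc KL2 p (qmix l₁)
        ≤ ∑ s, ∑ a, t * (p s a * Real.log (p s a / qmix l₂ s a)) :=
          Finset.sum_le_sum fun s _ => Finset.sum_le_sum fun a _ => hptw s a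
      _ = t * KL2 p (qmix l₂) := by
          rw [KL2, Finset.mul_sum]
          exact Finset.sum_congr rfl fun s _ => (Finset.mul_sum _ _ _).symm
      _ ≤ KL2 p (qmix l₂) := by nlinarith
end
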